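/- With the substitution s(G) = YBG, s(Y) = YBG, s(B) = BO, s(O) = YBO, the number of occurrences of the letter B in sⁿ(G) equals F(2n), where F is the Fibonacci sequence with F(0) = 0, F(1) = 1. -/

import Mathlib

inductive HepLetter : Type
  | G | Y | B | O
deriving DecidableEq

def hepSub : HepLetter → List HepLetter
  | HepLetter.G => [HepLetter.Y, HepLetter.B, HepLetter.G]
  | HepLetter.Y => [HepLetter.Y, HepLetter.B, HepLetter.G]
  | HepLetter.B => [HepLetter.B, HepLetter.O]
  | HepLetter.O => [HepLetter.Y, HepLetter.B, HepLetter.O]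

def hepStep (w : List HepLetter) : List HepLetter := w.flatMap hepSub

/-!
Every letter is sent to a word containing exactly one `B`, and to a word of length `2` or `3`
according as it is `B` or not. Hence if `sⁿ(G)` has `bₙ` letters `B` and length `ℓₙ`, then
`bₙ₊₁ = ℓₙ` and `ℓₙ₊₁ = 3ℓₙ - bₙ`, which is the recurrence `F(m + 4) = 3F(m + 2) - F(m)`
satisfied by `bₙ = F(2n)`, `ℓₙ = F(2n + 2)`.
-/

theorem Nat.fib_add_four_add_fib (m : ℕ) : fib (m + 4) + fib m = 3 * fib (m + 2) := by
  have h2 : fib (m + 2) = fib m + fib (m + 1) := fib_add_two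
  have h3 : fib (m + 3) = fib (m + 1) + fib (m + 2) := fib_add_two
  have h4 : fib (m + 4) = fib (m + 2) + fib (m + 3) := fib_add_two
  omega

namespace HepLetter

theorem count_B_hepSub (a : HepLetter) : (hepSub a).count B = 1 := by
  cases a <;> rfl

theorem count_B_hepStep (w : List HepLetter) : (hepStep w).count B = w.length := by
  simp [hepStep, List.count_flatMap, Function.comp_def, count_B_hepSub]

theorem length_hepStep_add_count_B (w : List HepLetter) :
    (hepStep w).length + w.count B = 3 * w.length := by
  induction w with
  | nil => rfl
  | cons a w ih =>
    have hcons : hepStep (a :: w) = hepSub a ++ hepStep w := rfl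
    cases a <;> simp [hcons, hepSub] <;> omega

end HepLetter

open HepLetter in
theorem hep_count_B_fib (n : ℕ) :
    (hepStep^[n] [HepLetter.G]).count HepLetter.B = Nat.fib (2 * n) := by
  suffices h : ∀ n, (hepStep^[n] [G]).count B = Nat.fib (2 * n) ∧
      (hepStep^[n] [G]).length = Nat.fib (2 * n + 2) from (h n).1
  intro n
  induction n with
  | zero => simp
  | succ n ih =>
    obtain ⟨hb, hl⟩ := ih
    have hstep := length_hepStep_add_count_B (hepStep^[n] [G])
    have hfib := Nat.fib_add_four_add_fib (2 * n)
    rw [Function.iterate_succ_apply', count_B_hepStep, hl]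
    refine ⟨rfl, ?_⟩
    rw [hl, hb] at hstep
    rw [show 2 * (n + 1) + 2 = 2 * n + 4 by ring]
    omega
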